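/- arXiv:1607.08369 — 4 statements merged into one kernel-verified Lean document; each statement's English description precedes it below -/
import Mathlib

section
/- For every classical propositional formula α, Prob(α) = Σ_{v : B_α → {0,1}, v ⊨ α} Σ_{i ∈ U_v} |⟨u_i, ψ⟩|², where the inner sum is a convergent sum (tsum) of nonnegative reals over U_v. -/
open scoped InnerProductSpace

noncomputable section

/-- Classical propositional formulas, built from propositional symbols `B_j` (`j : ℕ`)
and `⊤` using `¬` and `→`. -/
inductive PropForm : Type
  | verum : PropForm
  | var : ℕ → PropForm
  | neg : PropForm → PropForm
  | imp : PropForm → PropForm → PropForm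

namespace PropForm

/-- The (finite) set of propositional symbols occurring in a formula. -/
def symbols : PropForm → Finset ℕ
  | verum => ∅
  | var n => {n}
  | neg a => a.symbols
  | imp a b => a.symbols ∪ b.symbols

/-- Truth-table evaluation of a formula under a (total) assignment of truth values. -/
def eval (w : ℕ → Bool) : PropForm → Bool
  | verum => true
  | var n => w n
  | neg a => !(a.eval w)
  | imp a b => !(a.eval w) || b.eval w

end PropForm

/-- A valuation `v` on a set `A` of propositional symbols (with `A ⊇ B_α`) satisfies `α`. -/
def Sat (A : Finset ℕ) (v : {n // n ∈ A} → Bool) (α : PropForm) : Prop :=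
  PropForm.eval (fun n => if h : n ∈ A then v ⟨n, h⟩ else false) α = true

instance (A : Finset ℕ) (α : PropForm) : DecidablePred (fun v => Sat A v α) := fun _ => by
  unfold Sat; infer_instance

variable {ι H : Type*} [NormedAddCommGroup H] [InnerProductSpace ℂ H] [CompleteSpace H]

/-- `Hs u S` is the topological closure of the linear span of `{u i : i ∈ S}`. -/
def Hs (u : HilbertBasis ι ℂ H) (S : Set ι) : Submodule ℂ H :=
  (Submodule.span ℂ ((fun i => u i) '' S)).topologicalClosure

instance (u : HilbertBasis ι ℂ H) (S : Set ι) : Submodule.HasOrthogonalProjection (Hs u S) :=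
  haveI : CompleteSpace (Hs u S) :=
    IsClosed.completeSpace_coe (hs := Submodule.isClosed_topologicalClosure _)
  Submodule.HasOrthogonalProjection.ofCompleteSpace _

/-- The orthogonal projection of `H` onto `Hs u S`, as an operator on `H`. -/
def P (u : HilbertBasis ι ℂ H) (S : Set ι) : H →L[ℂ] H :=
  (Hs u S).subtypeL.comp (Submodule.orthogonalProjectionOnto (Hs u S))

/-- `Pj u lam j S` is the orthogonal projection onto the closure of the span of
`{u i : lam j i ∈ S}`. -/
def Pj (u : HilbertBasis ι ℂ H) (lam : ℕ → ι → ℝ) (j : ℕ) (S : Set ℝ) : H →L[ℂ] H :=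
  P u {i | lam j i ∈ S}

/-- `Prob u lam up ψ α` is the probability assigned to the classical formula `α`:
the sum, over the valuations `v` on `B_α` satisfying `α`, of
`Re ⟪ψ, P_{j_k}(D_{j_k}^v)(⋯ (P_{j_1}(D_{j_1}^v) ψ) ⋯)⟫` where `B_α = {j_1 < … < j_k}`
and `D_j^v` is `up j` if `v (B_j) = 1` and its complement otherwise. -/
def Prob (u : HilbertBasis ι ℂ H) (lam : ℕ → ι → ℝ) (up : ℕ → Set ℝ) (ψ : H)
    (α : PropForm) : ℝ :=
  ∑ v ∈ Finset.univ.filter (fun v : {n // n ∈ α.symbols} → Bool => Sat α.symbols v α),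
    (⟪ψ, (α.symbols.sort (· ≤ ·)).foldl
        (fun x j => if h : j ∈ α.symbols then
            Pj u lam j (if v ⟨j, h⟩ then up j else (up j)ᶜ) x
          else x) ψ⟫_ℂ).re

/-- `UvSet u lam up A v` is the set `U_v` of basis indices `i` such that `λ_j(i) ∈ D_j^v`
for every symbol `j` in the domain `A` of the valuation `v`. -/
def UvSet (u : HilbertBasis ι ℂ H) (lam : ℕ → ι → ℝ) (up : ℕ → Set ℝ) (A : Finset ℕ)
    (v : {n // n ∈ A} → Bool) : Set ι :=
  {i | ∀ j : {n // n ∈ A}, lam j i ∈ (if v j then up (j : ℕ) else (up (j : ℕ))ᶜ)}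

/-!
In the Hilbert basis `u` every projection `P_j(S)` is diagonal: it keeps the coefficient of `u i`
when `λ_j(i) ∈ S` and kills it otherwise. So the iterated projection of `ψ` along a valuation `v`
has the coefficients of `ψ` restricted to `U_v`, and Parseval's identity turns
`Re ⟪ψ, ·⟫` into the sum of `‖⟪u i, ψ⟫‖²` over `U_v`.
-/

theorem Orthonormal.mem_orthogonal_span_image {𝕜 E κ : Type*} [RCLike 𝕜]
    [NormedAddCommGroup E] [InnerProductSpace 𝕜 E] {v : κ → E} (hv : Orthonormal 𝕜 v)
    {S : Set κ} {i : κ} (hi : i ∉ S) : v i ∈ (Submodule.span 𝕜 (v '' S))ᗮ := by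
  have hortho : Submodule.span 𝕜 {v i} ⟂ Submodule.span 𝕜 (v '' S) := by
    rw [Submodule.isOrtho_span]
    rintro _ rfl _ ⟨j, hj, rfl⟩
    exact hv.2 fun hij => hi (hij ▸ hj)
  exact hortho (Submodule.mem_span_singleton_self _)

lemma HilbertBasis.re_inner_eq_tsum_of_inner_eq_indicator {E κ : Type*} [NormedAddCommGroup E]
    [InnerProductSpace ℂ E] (u : HilbertBasis κ ℂ E) (S : Set κ) {x y : E}
    (hy : ∀ i, ⟪u i, y⟫_ℂ = S.indicator (fun i => ⟪u i, x⟫_ℂ) i) :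
    (⟪x, y⟫_ℂ).re = ∑' i : S, ‖⟪u (i : κ), x⟫_ℂ‖ ^ 2 := by
  rw [← u.tsum_inner_mul_inner x y, Complex.re_tsum (u.summable_inner_mul_inner x y),
    tsum_subtype S fun i => ‖⟪u i, x⟫_ℂ‖ ^ 2]
  refine tsum_congr fun i => ?_
  by_cases hi : i ∈ S
  · rw [hy, Set.indicator_of_mem hi, Set.indicator_of_mem hi, ← inner_conj_symm x (u i),
      RCLike.conj_mul]
    norm_cast
  · simp [hy, hi]

namespace HilbertBasis

variable (u : HilbertBasis ι ℂ H)

lemma inner_P_eq_indicator (S : Set ι) (x : H) (i : ι) :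
    ⟪u i, P u S x⟫_ℂ = S.indicator (fun i => ⟪u i, x⟫_ℂ) i := by
  change ⟪u i, (Hs u S).starProjection x⟫_ℂ = _
  rw [← Submodule.inner_starProjection_left_eq_right]
  by_cases hi : i ∈ S
  · have hmem : u i ∈ Hs u S :=
      Submodule.le_topologicalClosure _ (Submodule.subset_span ⟨i, hi, rfl⟩)
    rw [Submodule.starProjection_eq_self_iff.mpr hmem, Set.indicator_of_mem hi]
  · have hmem : u i ∈ (Hs u S)ᗮ := by
      rw [Hs, Submodule.orthogonal_closure]
      exact u.orthonormal.mem_orthogonal_span_image hi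
    rw [(Submodule.starProjection_apply_eq_zero_iff _).mpr hmem, Set.indicator_of_notMem hi,
      inner_zero_left]

lemma inner_foldl_P_eq_indicator (T : ℕ → Set ι) (f : H → ℕ → H) (l : List ℕ)
    (hf : ∀ j ∈ l, ∀ x, f x j = P u (T j) x) (x : H) (i : ι) :
    ⟪u i, l.foldl f x⟫_ℂ = {i | ∀ j ∈ l, i ∈ T j}.indicator (fun i => ⟪u i, x⟫_ℂ) i := by
  classical
  induction l using List.reverseRecOn with
  | nil => simp
  | append_singleton l j ih =>
    rw [List.foldl_append, List.foldl_cons, List.foldl_nil, hf j (by simp), inner_P_eq_indicator,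
      Set.indicator_apply, ih fun k hk => hf k (by simp [hk])]
    by_cases hj : i ∈ T j <;> simp [Set.indicator_apply, hj, or_imp, forall_and]

end HilbertBasis

theorem stmt4_general (u : HilbertBasis ι ℂ H) (ψ : H) (lam : ℕ → ι → ℝ) (up : ℕ → Set ℝ)
    (α : PropForm) :
    (∀ v : {n // n ∈ α.symbols} → Bool,
        Summable (fun i : UvSet u lam up α.symbols v => ‖⟪u (i : ι), ψ⟫_ℂ‖ ^ 2)) ∧
    Prob u lam up ψ α =
      ∑ v ∈ Finset.univ.filter (fun v : {n // n ∈ α.symbols} → Bool => Sat α.symbols v α),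
        ∑' i : UvSet u lam up α.symbols v, ‖⟪u (i : ι), ψ⟫_ℂ‖ ^ 2 := by
  refine ⟨fun v => (u.orthonormal.inner_products_summable ψ).subtype _,
    Finset.sum_congr rfl fun v _ => u.re_inner_eq_tsum_of_inner_eq_indicator _ fun i => ?_⟩
  let T (j : ℕ) : Set ι := {i | ∀ h : j ∈ α.symbols, lam j i ∈ if v ⟨j, h⟩ then up j else (up j)ᶜ}
  have hstep : ∀ j ∈ α.symbols.sort (· ≤ ·), ∀ x, (if h : j ∈ α.symbols then
      Pj u lam j (if v ⟨j, h⟩ then up j else (up j)ᶜ) x else x) = P u (T j) x := by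
    intro j hj x
    have hjA : j ∈ α.symbols := (Finset.mem_sort _).mp hj
    simp only [dif_pos hjA, Pj, T, forall_prop_of_true hjA]
  have hU : {i | ∀ j ∈ α.symbols.sort (· ≤ ·), i ∈ T j} = UvSet u lam up α.symbols v := by
    ext i
    simp [T, UvSet, Finset.mem_sort]
  rw [u.inner_foldl_P_eq_indicator T _ _ hstep, hU]

/-- `Prob(α) = Σ_{v : B_α → {0,1}, v ⊨ α} Σ_{i ∈ U_v} |⟨u i, ψ⟩|²`, the inner sums being
convergent sums of nonnegative reals. -/
theorem stmt4 (u : HilbertBasis ι ℂ H) (ψ : H) (hψ : ‖ψ‖ = 1)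
    (O : ℕ → H →L[ℂ] H) (lam : ℕ → ι → ℝ)
    (heig : ∀ j i, O j (u i) = (lam j i : ℂ) • u i) (up : ℕ → Set ℝ) (α : PropForm) :
    (∀ v : {n // n ∈ α.symbols} → Bool,
        Summable (fun i : UvSet u lam up α.symbols v => ‖⟪u (i : ι), ψ⟫_ℂ‖ ^ 2)) ∧
    Prob u lam up ψ α =
      ∑ v ∈ Finset.univ.filter (fun v : {n // n ∈ α.symbols} → Bool => Sat α.symbols v α),
        ∑' i : UvSet u lam up α.symbols v, ‖⟪u (i : ι), ψ⟫_ℂ‖ ^ 2 :=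
  stmt4_general u ψ lam up α

end
end

section
/- For every classical propositional formula α, 0 ≤ Prob(α) ≤ 1. -/
open scoped InnerProductSpace

noncomputable section

variable {ι H : Type*} [NormedAddCommGroup H] [InnerProductSpace ℂ H] [CompleteSpace H]

/-!
Every `P u S` is the orthogonal projection onto the closed span of a set of basis vectors, so
`P u S (u i)` is `u i` or `0` according as `i ∈ S`. Hence these projections commute and compose
by intersecting index sets, and the iterated projection attached to a valuation `v` is the
projection onto the span of those `u i` whose eigenvalue pattern `j ↦ (λ_j(i) ∈ ↑_j)` is `v`.
These cells partition `ι`, so their projections sum to the identity. Each summand of `Prob` is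
`Re ⟪ψ, Pψ⟫ ≥ 0` for a projection `P`, and summing over all valuations gives `‖ψ‖² = 1`.
-/

theorem HilbertBasis.ext_continuousLinearMap {𝕜 E F : Type*} [RCLike 𝕜] [NormedAddCommGroup E]
    [InnerProductSpace 𝕜 E] [NormedAddCommGroup F] [NormedSpace 𝕜 F] (b : HilbertBasis ι 𝕜 E)
    {f g : E →L[𝕜] F} (h : ∀ i, f (b i) = g (b i)) : f = g :=
  ContinuousLinearMap.ext_on (Submodule.dense_iff_topologicalClosure_eq_top.mpr b.dense_span)
    (by rintro _ ⟨i, rfl⟩; exact h i)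

section Projections

variable (u : HilbertBasis ι ℂ H)

theorem P_eq_starProjection (S : Set ι) : P u S = (Hs u S).starProjection := rfl

omit [CompleteSpace H] in
theorem basis_mem_orthogonal_Hs {S : Set ι} {i : ι} (hi : i ∉ S) : u i ∈ (Hs u S)ᗮ := by
  have hortho : Submodule.span ℂ {u i} ⟂ Submodule.span ℂ ((fun k => u k) '' S) := by
    refine Submodule.isOrtho_span.mpr ?_
    rintro _ rfl _ ⟨k, hk, rfl⟩
    exact u.orthonormal.2 fun hik => hi (hik ▸ hk)
  rw [Hs, Submodule.orthogonal_closure]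
  exact Submodule.isOrtho_iff_le.mp hortho (Submodule.mem_span_singleton_self _)

open Classical in
theorem P_apply_basis (S : Set ι) (i : ι) : P u S (u i) = if i ∈ S then u i else 0 := by
  rw [P_eq_starProjection]
  split_ifs with hi
  · exact Submodule.starProjection_eq_self_iff.mpr
      (Submodule.le_topologicalClosure _ (Submodule.subset_span ⟨i, hi, rfl⟩))
  · exact (Submodule.starProjection_apply_eq_zero_iff _).mpr (basis_mem_orthogonal_Hs u hi)

theorem P_univ : P u Set.univ = ContinuousLinearMap.id ℂ H :=
  u.ext_continuousLinearMap fun i => by simp [P_apply_basis]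

theorem P_comp_P (S T : Set ι) : (P u S).comp (P u T) = P u (T ∩ S) :=
  u.ext_continuousLinearMap fun i => by
    by_cases hT : i ∈ T <;> by_cases hS : i ∈ S <;> simp [P_apply_basis, hT, hS]

theorem foldl_P (S : ℕ → Set ι) (l : List ℕ) (x : H) :
    l.foldl (fun y j => P u (S j) y) x = P u {i | ∀ j ∈ l, i ∈ S j} x := by
  induction l generalizing x with
  | nil => simp [P_univ]
  | cons j l ih =>
    rw [List.foldl_cons, ih, ← ContinuousLinearMap.comp_apply, P_comp_P]
    congr 2
    ext i
    simp

theorem sum_P_of_partition {V : Type*} [Fintype V] (T : V → Set ι) (hT : ∀ i, ∃! v, i ∈ T v) :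
    ∑ v, P u (T v) = ContinuousLinearMap.id ℂ H :=
  u.ext_continuousLinearMap fun i => by
    classical
    obtain ⟨v₀, hv₀, huniq⟩ := hT i
    rw [_root_.sum_apply, Fintype.sum_eq_single v₀, P_apply_basis, if_pos hv₀]
    · rfl
    · intro v hv
      rw [P_apply_basis, if_neg fun hi => hv (huniq v hi)]

theorem re_inner_P_self_nonneg (S : Set ι) (x : H) : 0 ≤ (⟪x, P u S x⟫_ℂ).re := by
  rw [P_eq_starProjection, ← Submodule.inner_starProjection_left_eq_right (Hs u S)]
  exact (Hs u S).re_inner_starProjection_nonneg x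

end Projections

def valuationCell (lam : ℕ → ι → ℝ) (up : ℕ → Set ℝ) {A : Finset ℕ} (v : {n // n ∈ A} → Bool) :
    Set ι :=
  {i | ∀ j : {n // n ∈ A}, lam j i ∈ up j ↔ v j = true}

theorem existsUnique_mem_valuationCell (lam : ℕ → ι → ℝ) (up : ℕ → Set ℝ) (A : Finset ℕ)
    (i : ι) : ∃! v : {n // n ∈ A} → Bool, i ∈ valuationCell lam up v := by
  classical
  refine ⟨fun j => decide (lam j i ∈ up j), fun j => decide_eq_true_iff.symm, fun v hv => ?_⟩
  funext j
  simp [hv j]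

theorem foldl_Pj_eq_P_valuationCell (u : HilbertBasis ι ℂ H) (lam : ℕ → ι → ℝ)
    (up : ℕ → Set ℝ) (A : Finset ℕ) (v : {n // n ∈ A} → Bool) (x : H) :
    (A.sort (· ≤ ·)).foldl (fun y j => if h : j ∈ A then
        Pj u lam j (if v ⟨j, h⟩ then up j else (up j)ᶜ) y else y) x
      = P u (valuationCell lam up v) x := by
  -- `S j = univ` for `j ∉ A`, so the identity steps of the fold are projections too.
  let S : ℕ → Set ι := fun j => {i | ∀ h : j ∈ A, lam j i ∈ up j ↔ v ⟨j, h⟩ = true}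
  have hstep : (fun y j => if h : j ∈ A then
      Pj u lam j (if v ⟨j, h⟩ then up j else (up j)ᶜ) y else y) = fun y j => P u (S j) y := by
    funext y j
    by_cases h : j ∈ A
    · rw [dif_pos h, Pj]
      congr 2
      ext i
      cases hv : v ⟨j, h⟩ <;> simp [S, h, hv]
    · simp [S, h, P_univ]
  rw [hstep, foldl_P]
  congr 2
  ext i
  simp [S, valuationCell]

theorem stmt5_general (u : HilbertBasis ι ℂ H) (ψ : H) (hψ : ‖ψ‖ = 1)
    (lam : ℕ → ι → ℝ) (up : ℕ → Set ℝ) (α : PropForm) :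
    0 ≤ Prob u lam up ψ α ∧ Prob u lam up ψ α ≤ 1 := by
  let term : ({n // n ∈ α.symbols} → Bool) → ℝ := fun v =>
    (⟪ψ, P u (valuationCell lam up v) ψ⟫_ℂ).re
  have hProb : Prob u lam up ψ α = ∑ v ∈ Finset.univ.filter (fun v => Sat α.symbols v α), term v :=
    Finset.sum_congr rfl fun v _ => by rw [foldl_Pj_eq_P_valuationCell]
  have hterm_nonneg : ∀ v, 0 ≤ term v := fun v => re_inner_P_self_nonneg u _ ψ
  have htotal : ∑ v, term v = 1 := by
    simp only [term]
    rw [← Complex.re_sum, ← inner_sum, ← _root_.sum_apply,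
      sum_P_of_partition u _ (existsUnique_mem_valuationCell lam up α.symbols),
      ContinuousLinearMap.id_apply, inner_self_eq_norm_sq_to_K, hψ]
    simp
  rw [hProb]
  refine ⟨Finset.sum_nonneg fun v _ => hterm_nonneg v, htotal ▸ ?_⟩
  exact Finset.sum_le_sum_of_subset_of_nonneg (Finset.filter_subset _ _)
    fun v _ _ => hterm_nonneg v

/-- For every classical propositional formula `α`, `0 ≤ Prob(α) ≤ 1`. -/
theorem stmt5 (u : HilbertBasis ι ℂ H) (ψ : H) (hψ : ‖ψ‖ = 1)
    (O : ℕ → H →L[ℂ] H) (lam : ℕ → ι → ℝ)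
    (heig : ∀ j i, O j (u i) = (lam j i : ℂ) • u i) (up : ℕ → Set ℝ) (α : PropForm) :
    0 ≤ Prob u lam up ψ α ∧ Prob u lam up ψ α ≤ 1 :=
  stmt5_general u ψ hψ lam up α

end
end

section
/- Let α and β be classical propositional formulas such that no valuation on B_α ∪ B_β satisfies both α and β (i.e. ¬(β ∧ α) is a tautology). Then Prob(β ∨ α) = Prob(β) + Prob(α), where β ∨ α abbreviates (¬β) → α. -/
open scoped InnerProductSpace

noncomputable section

variable {ι H : Type*} [NormedAddCommGroup H] [InnerProductSpace ℂ H] [CompleteSpace H]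

/-! Write `probOn A α` for the analogue of `Prob(α)` computed with valuations on a set `A ⊇ B_α`
and the projections of all symbols of `A`. Enlarging `A` by a symbol `j ∉ B_α` does not change
it: the two valuations that differ only at `j` give the same term except that the factor
`P_j(↑_j)` becomes `P_j(↓_j)`, and these two projections add up to the identity because the
closed spans of complementary sets of basis vectors are orthogonal complements. So all three
probabilities can be computed over `B_α ∪ B_β`, where the valuations satisfying `β ∨ α` are the
disjoint union of those satisfying `β` and those satisfying `α`. -/
namespace PropForm

theorem eval_congr {w w' : ℕ → Bool} (α : PropForm) (h : ∀ n ∈ α.symbols, w n = w' n) :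
    α.eval w = α.eval w' := by
  induction α with
  | verum => rfl
  | var n => exact h n (Finset.mem_singleton_self n)
  | neg a iha => simp only [eval, iha h]
  | imp a b iha ihb =>
    simp only [symbols, Finset.mem_union] at h
    simp only [eval, iha fun n hn => h n (.inl hn), ihb fun n hn => h n (.inr hn)]

theorem eval_update_of_notMem {α : PropForm} {j : ℕ} (hj : j ∉ α.symbols) (w : ℕ → Bool)
    (b : Bool) : α.eval (Function.update w j b) = α.eval w :=
  eval_congr α fun _ hn => Function.update_of_ne (ne_of_mem_of_not_mem hn hj) _ _

end PropForm

def extendFalse (A : Finset ℕ) (v : {n // n ∈ A} → Bool) : ℕ → Bool :=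
  fun n => if h : n ∈ A then v ⟨n, h⟩ else false

theorem sat_iff_eval_extendFalse {A : Finset ℕ} {v : {n // n ∈ A} → Bool} {α : PropForm} :
    Sat A v α ↔ α.eval (extendFalse A v) = true := Iff.rfl

theorem sum_extendFalse_insert {M : Type*} [AddCommMonoid M] {A : Finset ℕ} {j : ℕ}
    (hj : j ∉ A) (F : (ℕ → Bool) → M) :
    ∑ v : {n // n ∈ insert j A} → Bool, F (extendFalse (insert j A) v) =
      ∑ v : {n // n ∈ A} → Bool, ∑ b : Bool, F (Function.update (extendFalse A v) j b) := by
  let e := (Equiv.arrowCongr (Finset.subtypeInsertEquivOption hj) (Equiv.refl Bool)).trans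
    Equiv.piOptionEquivProd
  have he : ∀ b v, extendFalse (insert j A) (e.symm (b, v)) =
      Function.update (extendFalse A v) j b := by
    intro b v
    funext n
    by_cases hn : n = j
    · subst hn; simp [e, extendFalse, Finset.subtypeInsertEquivOption]
    · by_cases hA : n ∈ A <;> simp [e, extendFalse, Finset.subtypeInsertEquivOption, hn, hA]
  rw [← e.symm.sum_comp, Fintype.sum_prod_type_right]
  simp only [he]

theorem Finset.exists_sort_insert_eq_append_cons {α : Type*} [LinearOrder α] {A : Finset α}
    {j : α} (hj : j ∉ A) :
    ∃ l₁ l₂ : List α, (insert j A).sort (· ≤ ·) = l₁ ++ j :: l₂ ∧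
      A.sort (· ≤ ·) = l₁ ++ l₂ := by
  have hmem : j ∈ (insert j A).sort (· ≤ ·) := by simp [Finset.mem_sort]
  obtain ⟨l₁, l₂, -, heq, herase⟩ := List.exists_erase_eq hmem
  refine ⟨l₁, l₂, heq, herase ▸ List.Perm.eq_of_pairwise' (A.pairwise_sort (· ≤ ·))
    (((insert j A).pairwise_sort (· ≤ ·)).sublist List.erase_sublist) ?_⟩
  have := (((insert j A).sort_perm_toList (· ≤ ·)).trans (Finset.toList_insert hj)).erase j
  rw [List.erase_cons_head] at this
  exact (A.sort_perm_toList (· ≤ ·)).trans this.symm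

section

omit [CompleteSpace H] in
theorem Hs_compl (u : HilbertBasis ι ℂ H) (S : Set ι) : Hs u Sᶜ = (Hs u S)ᗮ := by
  refine le_antisymm ?_ fun x hx => ?_
  · rw [Hs, Hs, Submodule.orthogonal_closure]
    refine Submodule.topologicalClosure_minimal _ ?_ (Submodule.isClosed_orthogonal _)
    rw [← Submodule.isOrtho_iff_le, Submodule.isOrtho_span]
    rintro _ ⟨i, hi, rfl⟩ _ ⟨k, hk, rfl⟩
    exact u.orthonormal.2 fun h => hi (h ▸ hk)
  · refine (Submodule.isClosed_topologicalClosure _).mem_of_tendsto (u.hasSum_repr x) ?_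
    refine Filter.Eventually.of_forall fun s => Submodule.sum_mem _ fun i _ => ?_
    by_cases hi : i ∈ S
    · have hui : (u i : H) ∈ Hs u S :=
        Submodule.le_topologicalClosure _ (Submodule.subset_span ⟨i, hi, rfl⟩)
      rw [u.repr_apply_apply, Submodule.inner_right_of_mem_orthogonal hui hx, zero_smul]
      exact Submodule.zero_mem _
    · exact Submodule.smul_mem _ _
        (Submodule.le_topologicalClosure _ (Submodule.subset_span ⟨i, hi, rfl⟩))

theorem P_add_P_compl (u : HilbertBasis ι ℂ H) (S : Set ι) (x : H) :
    P u S x + P u Sᶜ x = x := by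
  have hP : ∀ T, P u T = (Hs u T).starProjection := fun _ => rfl
  simp only [hP, Hs_compl]
  exact Submodule.starProjection_add_starProjection_orthogonal x

theorem Pj_add_Pj_compl (u : HilbertBasis ι ℂ H) (lam : ℕ → ι → ℝ) (j : ℕ) (S : Set ℝ)
    (x : H) :
    Pj u lam j S x + Pj u lam j Sᶜ x = x :=
  P_add_P_compl u {i | lam j i ∈ S} x

variable (u : HilbertBasis ι ℂ H) (lam : ℕ → ι → ℝ) (up : ℕ → Set ℝ)

def seqProj (w : ℕ → Bool) (l : List ℕ) (x : H) : H :=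
  l.foldl (fun x j => Pj u lam j (if w j then up j else (up j)ᶜ) x) x

theorem seqProj_add (w : ℕ → Bool) (l : List ℕ) (x y : H) :
    seqProj u lam up w l (x + y) = seqProj u lam up w l x + seqProj u lam up w l y := by
  induction l generalizing x y with
  | nil => rfl
  | cons j l ih => simp only [seqProj, List.foldl_cons, map_add] at ih ⊢; exact ih ..

theorem seqProj_congr {w w' : ℕ → Bool} {l : List ℕ} (h : ∀ j ∈ l, w j = w' j) (x : H) :
    seqProj u lam up w l x = seqProj u lam up w' l x :=
  List.foldl_ext _ _ _ fun y j hj => by rw [h j hj]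

theorem seqProj_append_cons (w : ℕ → Bool) (l₁ l₂ : List ℕ) (j : ℕ) (x : H) :
    seqProj u lam up w (l₁ ++ j :: l₂) x = seqProj u lam up w l₂
      (Pj u lam j (if w j then up j else (up j)ᶜ) (seqProj u lam up w l₁ x)) := by
  simp only [seqProj, List.foldl_append, List.foldl_cons]

theorem seqProj_update_true_add_update_false (w : ℕ → Bool) {l₁ l₂ : List ℕ} {j : ℕ}
    (hj : j ∉ l₁ ++ l₂) (x : H) :
    seqProj u lam up (Function.update w j true) (l₁ ++ j :: l₂) x +
        seqProj u lam up (Function.update w j false) (l₁ ++ j :: l₂) x =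
      seqProj u lam up w (l₁ ++ l₂) x := by
  have hw : ∀ b, ∀ l, (∀ i ∈ l, i ∈ l₁ ++ l₂) → ∀ y,
      seqProj u lam up (Function.update w j b) l y = seqProj u lam up w l y :=
    fun b l hl y => seqProj_congr u lam up
      (fun i hi => Function.update_of_ne (ne_of_mem_of_not_mem (hl i hi) hj) _ _) y
  rw [seqProj_append_cons, seqProj_append_cons, hw true l₁ (fun _ => List.mem_append_left _),
    hw false l₁ (fun _ => List.mem_append_left _), hw true l₂ (fun _ => List.mem_append_right _),
    hw false l₂ (fun _ => List.mem_append_right _), ← seqProj_add]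
  simp only [Function.update_self, if_true, Bool.false_eq_true, if_false]
  rw [Pj_add_Pj_compl]
  simp only [seqProj, List.foldl_append]

variable (ψ : H)

def probOn (A : Finset ℕ) (α : PropForm) : ℝ :=
  ∑ v : {n // n ∈ A} → Bool,
    if Sat A v α then (⟪ψ, seqProj u lam up (extendFalse A v) (A.sort (· ≤ ·)) ψ⟫_ℂ).re else 0

theorem prob_eq_probOn_symbols (α : PropForm) :
    Prob u lam up ψ α = probOn u lam up ψ α.symbols α := by
  rw [Prob, probOn, Finset.sum_filter]
  refine Finset.sum_congr rfl fun v _ => ?_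
  congr 3
  refine List.foldl_ext _ _ _ fun x j hj => ?_
  have hjα : j ∈ α.symbols := (Finset.mem_sort _).mp hj
  simp only [extendFalse, dif_pos hjα]

theorem probOn_insert {A : Finset ℕ} {α : PropForm} (hα : α.symbols ⊆ A) {j : ℕ} (hj : j ∉ A) :
    probOn u lam up ψ (insert j A) α = probOn u lam up ψ A α := by
  obtain ⟨l₁, l₂, hI, hA⟩ := Finset.exists_sort_insert_eq_append_cons hj
  have hjl : j ∉ l₁ ++ l₂ := by rw [← hA, Finset.mem_sort]; exact hj
  simp only [probOn, sat_iff_eval_extendFalse]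
  rw [sum_extendFalse_insert hj (fun w => if α.eval w = true then
    (⟪ψ, seqProj u lam up w ((insert j A).sort (· ≤ ·)) ψ⟫_ℂ).re else 0)]
  refine Finset.sum_congr rfl fun v _ => ?_
  simp only [PropForm.eval_update_of_notMem (fun h => hj (hα h)), Fintype.sum_bool]
  split_ifs
  · rw [← Complex.add_re, ← inner_add_right, hI, hA,
      seqProj_update_true_add_update_false _ _ _ _ hjl]
  · simp

theorem probOn_union_of_subset {A : Finset ℕ} {α : PropForm} (hα : α.symbols ⊆ A)
    (B : Finset ℕ) : probOn u lam up ψ (A ∪ B) α = probOn u lam up ψ A α := by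
  induction B using Finset.induction with
  | empty => rw [Finset.union_empty]
  | insert j B _ ih =>
    rw [Finset.union_insert]
    by_cases hj : j ∈ A ∪ B
    · rw [Finset.insert_eq_of_mem hj, ih]
    · rw [probOn_insert _ _ _ _ (hα.trans Finset.subset_union_left) hj, ih]

theorem prob_eq_probOn {A : Finset ℕ} {α : PropForm} (hα : α.symbols ⊆ A) :
    Prob u lam up ψ α = probOn u lam up ψ A α := by
  rw [prob_eq_probOn_symbols, ← probOn_union_of_subset u lam up ψ subset_rfl A,
    Finset.union_eq_right.mpr hα]

theorem probOn_imp_neg_eq_add {A : Finset ℕ} {α β : PropForm}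
    (hdisj : ∀ v, ¬ (Sat A v β ∧ Sat A v α)) :
    probOn u lam up ψ A (.imp (.neg β) α) = probOn u lam up ψ A β + probOn u lam up ψ A α := by
  rw [probOn, probOn, probOn, ← Finset.sum_add_distrib]
  refine Finset.sum_congr rfl fun v _ => ?_
  have hor : Sat A v (.imp (.neg β) α) ↔ Sat A v β ∨ Sat A v α := by
    simp [Sat, PropForm.eval]
  by_cases hβ : Sat A v β <;> by_cases hα : Sat A v α
  · exact absurd ⟨hβ, hα⟩ (hdisj v)
  all_goals simp [hor, hβ, hα]

end

theorem stmt8_general (u : HilbertBasis ι ℂ H) (ψ : H) (lam : ℕ → ι → ℝ) (up : ℕ → Set ℝ) (α β : PropForm)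
    (hdisj : ∀ w : {n // n ∈ α.symbols ∪ β.symbols} → Bool,
        ¬ (Sat (α.symbols ∪ β.symbols) w β ∧ Sat (α.symbols ∪ β.symbols) w α)) :
    Prob u lam up ψ (PropForm.imp (PropForm.neg β) α) =
      Prob u lam up ψ β + Prob u lam up ψ α := by
  have hγ : (PropForm.imp (PropForm.neg β) α).symbols ⊆ α.symbols ∪ β.symbols :=
    (Finset.union_comm _ _).subset
  rw [prob_eq_probOn u lam up ψ hγ, prob_eq_probOn u lam up ψ Finset.subset_union_right,
    prob_eq_probOn u lam up ψ Finset.subset_union_left]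
  exact probOn_imp_neg_eq_add u lam up ψ hdisj

/-- If no valuation on `B_α ∪ B_β` satisfies both `α` and `β` (`¬(β ∧ α)` is a tautology),
then `Prob(β ∨ α) = Prob(β) + Prob(α)`, where `β ∨ α` abbreviates `(¬β) → α`. -/
theorem stmt8 (u : HilbertBasis ι ℂ H) (ψ : H) (hψ : ‖ψ‖ = 1)
    (O : ℕ → H →L[ℂ] H) (lam : ℕ → ι → ℝ)
    (heig : ∀ j i, O j (u i) = (lam j i : ℂ) • u i) (up : ℕ → Set ℝ) (α β : PropForm)
    (hdisj : ∀ w : {n // n ∈ α.symbols ∪ β.symbols} → Bool,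
        ¬ (Sat (α.symbols ∪ β.symbols) w β ∧ Sat (α.symbols ∪ β.symbols) w α)) :
    Prob u lam up ψ (PropForm.imp (PropForm.neg β) α) =
      Prob u lam up ψ β + Prob u lam up ψ α :=
  stmt8_general u ψ lam up α β hdisj
end
end

section
/- Let K' and K'' be closed subspaces of 𝓗. The following are equivalent: (a) (K' ⊓ K'') ⊔ ((K')ᗮ ⊓ K'') ⊔ (K' ⊓ (K'')ᗮ) ⊔ ((K')ᗮ ⊓ (K'')ᗮ) = 𝓗; (b) (K' ⊓ K'') ⊔ ((K')ᗮ ⊓ K'') = K''; (c) (K' ⊔ (K'')ᗮ) ⊓ K'' = K' ⊓ K''. -/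
variable {𝓗 : Type*} [NormedAddCommGroup 𝓗] [InnerProductSpace ℂ 𝓗] [CompleteSpace 𝓗]

/-!
Say that `P` is compatible with `Q` when `(P ⊓ Q ⊔ Pᗮ ⊓ Q)ᗮ = Qᗮ`; for closed `Q` this is (b).
By the orthomodular law `N = K ⊔ Kᗮ ⊓ N` (for `K ≤ N` with `K` closed), compatibility and (c)
both amount to `(P ⊓ Q ⊔ Pᗮ ⊓ Q)ᗮ ⊓ Q = ⊥`. Compatibility with `Q` passes to `Qᗮ`: writing
`x ∈ Qᗮ` as `u + v` with `u ∈ P` and `v ∈ Pᗮ`, the hypothesis forces `u ∈ Qᗮ`. Hence (b) makes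
the orthogonal complement of the sum in (a) equal to `Qᗮ ⊓ Q = ⊥`, and conversely (a) gives
`(P ⊓ Q ⊔ Pᗮ ⊓ Q)ᗮ ⊓ Q = ⊥`.
-/

namespace Submodule

variable {𝕜 E : Type*} [RCLike 𝕜] [NormedAddCommGroup E] [InnerProductSpace 𝕜 E]

theorem orthogonal_inf_eq_bot_iff {K N : Submodule 𝕜 E} [K.HasOrthogonalProjection]
    (h : K ≤ N) : Kᗮ ⊓ N = ⊥ ↔ N = K := by
  constructor
  · intro hbot
    calc N = K ⊔ Kᗮ ⊓ N := (sup_orthogonal_inf_of_hasOrthogonalProjection h).symm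
      _ = K := by rw [hbot, sup_bot_eq]
  · rintro rfl
    rw [inf_comm, inf_orthogonal_eq_bot]

theorem topologicalClosure_eq_iff_orthogonal_eq [CompleteSpace E] {S K : Submodule 𝕜 E}
    [K.HasOrthogonalProjection] : S.topologicalClosure = K ↔ Sᗮ = Kᗮ := by
  rw [← orthogonal_orthogonal_eq_closure]
  constructor
  · intro h
    rw [← triorthogonal_eq_orthogonal, h]
  · intro h
    rw [h, orthogonal_orthogonal]

def IsCompatible (P Q : Submodule 𝕜 E) : Prop :=
  (P ⊓ Q ⊔ Pᗮ ⊓ Q)ᗮ = Qᗮ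

theorem orthogonal_le_orthogonal_inf_sup_inf (P Q : Submodule 𝕜 E) :
    Qᗮ ≤ (P ⊓ Q ⊔ Pᗮ ⊓ Q)ᗮ :=
  orthogonal_le (sup_le inf_le_right inf_le_right)

variable {P Q : Submodule 𝕜 E}

theorem orthogonal_le_inf_sup_inf [P.HasOrthogonalProjection]
    (h : (P ⊓ Q ⊔ Pᗮ ⊓ Q)ᗮ ≤ Qᗮ) : Qᗮ ≤ P ⊓ Qᗮ ⊔ Pᗮ ⊓ Qᗮ := by
  intro x hx
  obtain ⟨u, hu, v, hv, rfl⟩ := P.exists_add_mem_mem_orthogonal x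
  have hu_perp_inf : u ∈ (P ⊓ Q)ᗮ := by
    simpa using (P ⊓ Q)ᗮ.sub_mem (orthogonal_le inf_le_right hx) (orthogonal_le inf_le_left hv)
  have hu_perp_orthogonal_inf : u ∈ (Pᗮ ⊓ Q)ᗮ :=
    orthogonal_le inf_le_left (le_orthogonal_orthogonal P hu)
  have huQ : u ∈ Qᗮ := h (by rw [← inf_orthogonal]; exact ⟨hu_perp_inf, hu_perp_orthogonal_inf⟩)
  have hvQ : v ∈ Qᗮ := by simpa using Qᗮ.sub_mem hx huQ
  exact mem_sup.mpr ⟨u, ⟨hu, huQ⟩, v, ⟨hv, hvQ⟩, rfl⟩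

theorem IsCompatible.orthogonal_right [P.HasOrthogonalProjection] (h : IsCompatible P Q) :
    IsCompatible P Qᗮ :=
  le_antisymm (orthogonal_le (orthogonal_le_inf_sup_inf h.le))
    (orthogonal_le_orthogonal_inf_sup_inf P Qᗮ)

theorem isCompatible_iff_topologicalClosure_eq [CompleteSpace E] [Q.HasOrthogonalProjection] :
    IsCompatible P Q ↔ (P ⊓ Q ⊔ Pᗮ ⊓ Q).topologicalClosure = Q :=
  topologicalClosure_eq_iff_orthogonal_eq.symm

theorem isCompatible_iff_orthogonal_inf_eq_bot [Q.HasOrthogonalProjection] :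
    IsCompatible P Q ↔ (P ⊓ Q ⊔ Pᗮ ⊓ Q)ᗮ ⊓ Q = ⊥ := by
  rw [IsCompatible, ← orthogonal_inf_eq_bot_iff (orthogonal_le_orthogonal_inf_sup_inf P Q),
    orthogonal_orthogonal, inf_comm]

theorem isCompatible_iff_orthogonal_inf_inf_eq [Q.HasOrthogonalProjection]
    [(P ⊓ Q).HasOrthogonalProjection] : IsCompatible P Q ↔ (Pᗮ ⊓ Q)ᗮ ⊓ Q = P ⊓ Q := by
  have hle : P ⊓ Q ≤ (Pᗮ ⊓ Q)ᗮ ⊓ Q :=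
    le_inf (inf_le_left.trans ((le_orthogonal_orthogonal P).trans (orthogonal_le inf_le_left)))
      inf_le_right
  rw [isCompatible_iff_orthogonal_inf_eq_bot, ← orthogonal_inf_eq_bot_iff hle, ← inf_orthogonal,
    inf_assoc]

theorem isCompatible_iff_orthogonal_sup_eq_bot [P.HasOrthogonalProjection]
    [Q.HasOrthogonalProjection] :
    IsCompatible P Q ↔ (P ⊓ Q ⊔ Pᗮ ⊓ Q ⊔ P ⊓ Qᗮ ⊔ Pᗮ ⊓ Qᗮ)ᗮ = ⊥ := by
  rw [sup_assoc _ (P ⊓ Qᗮ), ← inf_orthogonal]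
  constructor
  · intro h
    rw [h, h.orthogonal_right, inf_orthogonal_eq_bot]
  · intro h
    have hQ : Q ≤ (P ⊓ Qᗮ ⊔ Pᗮ ⊓ Qᗮ)ᗮ := by
      simpa using orthogonal_le_orthogonal_inf_sup_inf P Qᗮ
    exact isCompatible_iff_orthogonal_inf_eq_bot.mpr (eq_bot_mono (inf_le_inf_left _ hQ) h)

theorem topologicalClosure_sup_orthogonal [CompleteSpace E] [Q.HasOrthogonalProjection] :
    (P ⊔ Qᗮ).topologicalClosure = (Pᗮ ⊓ Q)ᗮ := by
  rw [← orthogonal_orthogonal_eq_closure, ← inf_orthogonal, orthogonal_orthogonal]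

end Submodule

open Submodule in
/-- For closed subspaces `K'` and `K''` of a complex Hilbert space, with `⊔` denoting the
topological closure of the sum, the following are equivalent:
(a) `(K' ⊓ K'') ⊔ ((K')ᗮ ⊓ K'') ⊔ (K' ⊓ (K'')ᗮ) ⊔ ((K')ᗮ ⊓ (K'')ᗮ) = 𝓗`;
(b) `(K' ⊓ K'') ⊔ ((K')ᗮ ⊓ K'') = K''`;
(c) `(K' ⊔ (K'')ᗮ) ⊓ K'' = K' ⊓ K''`. -/
theorem stmt17 (K' K'' : Submodule ℂ 𝓗)
    (h' : IsClosed (K' : Set 𝓗)) (h'' : IsClosed (K'' : Set 𝓗)) :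
    (((K' ⊓ K'') ⊔ (K'ᗮ ⊓ K'') ⊔ (K' ⊓ K''ᗮ) ⊔ (K'ᗮ ⊓ K''ᗮ)).topologicalClosure = ⊤ ↔
      ((K' ⊓ K'') ⊔ (K'ᗮ ⊓ K'')).topologicalClosure = K'') ∧
    (((K' ⊓ K'') ⊔ (K'ᗮ ⊓ K'')).topologicalClosure = K'' ↔
      (K' ⊔ K''ᗮ).topologicalClosure ⊓ K'' = K' ⊓ K'') := by
  have : CompleteSpace K' := h'.completeSpace_coe
  have : CompleteSpace K'' := h''.completeSpace_coe
  have : CompleteSpace (K' ⊓ K'' : Submodule ℂ 𝓗) := (h'.inter h'').completeSpace_coe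
  rw [topologicalClosure_eq_top_iff, ← isCompatible_iff_topologicalClosure_eq,
    ← isCompatible_iff_orthogonal_sup_eq_bot, topologicalClosure_sup_orthogonal,
    ← isCompatible_iff_orthogonal_inf_inf_eq]
  exact ⟨Iff.rfl, Iff.rfl⟩
end
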